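/- arXiv:1011.2462 — 2 statements merged into one kernel-verified Lean document; each statement's English description precedes it below -/
import Mathlib

section
/- For distinct nonzero complex numbers t₁, t₂ with |t₁/u| < 1 and |t₂/u| < 1, and integers n₁ ≥ n₂, the identity χ_{n₁,n₂}(t₁,t₂) · 1/((1-u^{-1}t₁)(1-u^{-1}t₂)) = ∑_{(m₁,m₂)∈ℤ²} Θ(m₁-n₁)Θ(n₁-m₂)Θ(m₂-n₂) u^{n₁+n₂-m₁-m₂} χ_{m₁,m₂}(t₁,t₂) holds, where Θ(k)=1 for k ≥ 0 and 0 otherwise, and χ_{m₁,m₂}(t₁,t₂) = (t₁^{m₁+1}t₂^{m₂} - t₁^{m₂}t₂^{m₁+1})/(t₁-t₂). -/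
/-! Multiplying out the Weyl numerator, the Pieri sum splits into two products of a geometric
series in `m₁ ≥ n₁` and a finite geometric sum in `n₂ ≤ m₂ ≤ n₁`, all absolutely convergent since
`‖tᵢ / u‖ < 1`. Summing them gives
`(t₁^{n₁+1} (t₂^{n₂} - u^{n₂-n₁-1} t₂^{n₁+1}) - t₂^{n₁+1} (t₁^{n₂} - u^{n₂-n₁-1} t₁^{n₁+1}))`
over `(1 - t₁/u)(1 - t₂/u)(t₁ - t₂)`, and the two terms carrying `u^{n₂-n₁-1}` cancel. -/

/-- The character of the irreducible `GL₂`-representation attached to a pair of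
integers `(m₁, m₂)`, by the Weyl character formula. -/
noncomputable def gl2Char (m₁ m₂ : ℤ) (t₁ t₂ : ℂ) : ℂ :=
  (t₁ ^ (m₁ + 1) * t₂ ^ m₂ - t₁ ^ m₂ * t₂ ^ (m₁ + 1)) / (t₁ - t₂)

section GeometricTail

variable {K : Type*} [NormedField K]

def geomTail (u t : K) (n k : ℤ) : K := (if 0 ≤ k - n then 1 else 0) * u ^ (n - k) * t ^ k

variable {u t : K}

theorem hasSum_geomTail (ht : t ≠ 0) (h : ‖t / u‖ < 1) (n : ℤ) :
    HasSum (geomTail u t n) (t ^ n / (1 - t / u)) := by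
  have hshift : Function.Injective (fun j : ℕ => n + (j : ℤ)) := fun a b hab => by simpa using hab
  rw [← hshift.hasSum_iff]
  · have hterm : ∀ j : ℕ, geomTail u t n (n + j) = t ^ n * (t / u) ^ j := by
      intro j
      rw [geomTail, if_pos (by omega), div_pow, ← zpow_natCast t, ← zpow_natCast u, zpow_add₀ ht,
        show n - (n + j) = -(j : ℤ) by ring, zpow_neg]
      ring
    simpa only [Function.comp_def, hterm, div_eq_mul_inv] using
      (hasSum_geometric_of_norm_lt_one h).mul_left (t ^ n)
  · intro k hk
    have hbelow : ¬ 0 ≤ k - n := fun _ =>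
      hk ⟨(k - n).toNat, show n + ((k - n).toNat : ℤ) = k by omega⟩
    rw [geomTail, if_neg hbelow, zero_mul, zero_mul]

theorem summable_norm_geomTail (ht : t ≠ 0) (h : ‖t / u‖ < 1) (n : ℤ) :
    Summable fun k => ‖geomTail u t n k‖ := by
  have hnorm : ∀ k, ‖geomTail u t n k‖ = geomTail ‖u‖ ‖t‖ n k := by
    intro k
    simp only [geomTail, norm_mul, norm_zpow, apply_ite norm, norm_one, norm_zero]
  simp only [hnorm]
  exact (hasSum_geomTail (norm_ne_zero_iff.mpr ht) (by rwa [← norm_div, norm_norm]) n).summable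

theorem geomTail_truncate (hu : u ≠ 0) {p q : ℤ} (hpq : p ≤ q + 1) (k : ℤ) :
    (if 0 ≤ q - k then 1 else 0) * geomTail u t p k
      = geomTail u t p k - u ^ (p - (q + 1)) * geomTail u t (q + 1) k := by
  have hu' : u ^ (p - k) = u ^ (p - (q + 1)) * u ^ (q + 1 - k) := by
    rw [← zpow_add₀ hu]; ring_nf
  simp only [geomTail]
  split_ifs <;> first | omega | (rw [hu']; ring)

theorem hasSum_truncated_geomTail (ht : t ≠ 0) (hu : u ≠ 0) (h : ‖t / u‖ < 1) {p q : ℤ}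
    (hpq : p ≤ q + 1) :
    HasSum (fun k => (if 0 ≤ q - k then 1 else 0) * geomTail u t p k)
      ((t ^ p - u ^ (p - (q + 1)) * t ^ (q + 1)) / (1 - t / u)) := by
  simp only [geomTail_truncate hu hpq]
  have hdiff := (hasSum_geomTail ht h p).sub
    ((hasSum_geomTail ht h (q + 1)).mul_left (u ^ (p - (q + 1))))
  rwa [← mul_div_assoc, ← sub_div] at hdiff

theorem summable_norm_truncated_geomTail (ht : t ≠ 0) (h : ‖t / u‖ < 1) (p q : ℤ) :
    Summable fun k => ‖(if 0 ≤ q - k then 1 else 0) * geomTail u t p k‖ := by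
  refine (summable_norm_geomTail ht h p).of_nonneg_of_le (fun _ => norm_nonneg _) fun k => ?_
  split_ifs <;> simp

end GeometricTail

theorem HasSum.mul_of_summable_norm {ι κ R : Type*} [NormedRing R] {f : ι → R} {g : κ → R}
    {a b : R} (hf : HasSum f a) (hg : HasSum g b) (hf' : Summable fun i => ‖f i‖)
    (hg' : Summable fun k => ‖g k‖) :
    HasSum (fun x : ι × κ => f x.1 * g x.2) (a * b) :=
  hf.mul hg (summable_mul_of_summable_norm' hf' hf.summable hg' hg.summable)

theorem pieri_summand_eq {t₁ t₂ u : ℂ} (ht₁ : t₁ ≠ 0) (ht₂ : t₂ ≠ 0) (hu : u ≠ 0)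
    (n₁ n₂ m₁ m₂ : ℤ) :
    (if 0 ≤ m₁ - n₁ then (1 : ℂ) else 0) * (if 0 ≤ n₁ - m₂ then (1 : ℂ) else 0) *
        (if 0 ≤ m₂ - n₂ then (1 : ℂ) else 0) * u ^ (n₁ + n₂ - m₁ - m₂) * gl2Char m₁ m₂ t₁ t₂
      = (t₁ * (geomTail u t₁ n₁ m₁ * ((if 0 ≤ n₁ - m₂ then 1 else 0) * geomTail u t₂ n₂ m₂))
          - t₂ * (geomTail u t₂ n₁ m₁ * ((if 0 ≤ n₁ - m₂ then 1 else 0) * geomTail u t₁ n₂ m₂)))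
        / (t₁ - t₂) := by
  have hu' : u ^ (n₁ + n₂ - m₁ - m₂) = u ^ (n₁ - m₁) * u ^ (n₂ - m₂) := by
    rw [← zpow_add₀ hu]; ring_nf
  simp only [gl2Char, geomTail, hu', zpow_add_one₀ ht₁, zpow_add_one₀ ht₂]
  ring

theorem gl2_baxter_q0_eigen_general (t₁ t₂ u : ℂ) (ht₁ : t₁ ≠ 0) (ht₂ : t₂ ≠ 0)
    (hu : u ≠ 0) (h₁ : ‖t₁ / u‖ < 1) (h₂ : ‖t₂ / u‖ < 1) (n₁ n₂ : ℤ) (hn : n₂ ≤ n₁) :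
    gl2Char n₁ n₂ t₁ t₂ * (1 / ((1 - u⁻¹ * t₁) * (1 - u⁻¹ * t₂))) =
      ∑' m : ℤ × ℤ,
        (if 0 ≤ m.1 - n₁ then (1 : ℂ) else 0) * (if 0 ≤ n₁ - m.2 then (1 : ℂ) else 0) *
          (if 0 ≤ m.2 - n₂ then (1 : ℂ) else 0) * u ^ (n₁ + n₂ - m.1 - m.2) *
          gl2Char m.1 m.2 t₁ t₂ := by
  have hprod {s t : ℂ} (hs : s ≠ 0) (ht : t ≠ 0) (hsu : ‖s / u‖ < 1) (htu : ‖t / u‖ < 1) :=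
    (hasSum_geomTail hs hsu n₁).mul_of_summable_norm
      (hasSum_truncated_geomTail ht hu htu (by omega : n₂ ≤ n₁ + 1))
      (summable_norm_geomTail hs hsu n₁) (summable_norm_truncated_geomTail ht htu n₂ n₁)
  have hsum := (((hprod ht₁ ht₂ h₁ h₂).mul_left t₁).sub
    ((hprod ht₂ ht₁ h₂ h₁).mul_left t₂)).div_const (t₁ - t₂)
  simp_rw [pieri_summand_eq ht₁ ht₂ hu, hsum.tsum_eq, gl2Char, div_mul_eq_mul_div, inv_mul_eq_div,
    zpow_add_one₀ ht₁, zpow_add_one₀ ht₂]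
  have hD {t : ℂ} (ht : ‖t / u‖ < 1) : 1 - t / u ≠ 0 :=
    sub_ne_zero.mpr fun h => by simp [← h] at ht
  congr 1
  field_simp [hD h₁, hD h₂]
  ring

/-- Eigenfunction property of the `q = 0` Baxter operator for `gl₂` (Pieri rule):
`χ_{n₁,n₂}(t₁,t₂)·((1-u⁻¹t₁)(1-u⁻¹t₂))⁻¹
  = ∑_{(m₁,m₂)∈ℤ²} Θ(m₁-n₁)Θ(n₁-m₂)Θ(m₂-n₂) u^{n₁+n₂-m₁-m₂} χ_{m₁,m₂}(t₁,t₂)`. -/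
theorem gl2_baxter_q0_eigen (t₁ t₂ u : ℂ) (ht₁ : t₁ ≠ 0) (ht₂ : t₂ ≠ 0) (ht : t₁ ≠ t₂)
    (hu : u ≠ 0) (h₁ : ‖t₁ / u‖ < 1) (h₂ : ‖t₂ / u‖ < 1) (n₁ n₂ : ℤ) (hn : n₂ ≤ n₁) :
    gl2Char n₁ n₂ t₁ t₂ * (1 / ((1 - u⁻¹ * t₁) * (1 - u⁻¹ * t₂))) =
      ∑' m : ℤ × ℤ,
        (if 0 ≤ m.1 - n₁ then (1 : ℂ) else 0) * (if 0 ≤ n₁ - m.2 then (1 : ℂ) else 0) *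
          (if 0 ≤ m.2 - n₂ then (1 : ℂ) else 0) * u ^ (n₁ + n₂ - m.1 - m.2) *
          gl2Char m.1 m.2 t₁ t₂ :=
  gl2_baxter_q0_eigen_general t₁ t₂ u ht₁ ht₂ hu h₁ h₂ n₁ n₂ hn
end

section
/- For distinct real λ₁, λ₂, distinct real t₁, t₂ and real x₁ > x₂: the doubly-indexed sum/integral identity ∫_{ℝ²} Θ(y₁-x₁)Θ(x₁-y₂)Θ(y₂-x₂) e^{is(x₁+x₂-y₁-y₂)} Ψ(y₁,y₂) dy₁dy₂ = (1/((s-λ₁)(s-λ₂))) · (1/i²) · Ψ(x₁,x₂) holds for Ψ(y₁,y₂) = (e^{i(λ₁y₁+λ₂y₂)} - e^{i(λ₂y₁+λ₁y₂)})/(i(λ₁-λ₂))·Θ(y₁-y₂), provided Im(s) < 0 so all integrals converge. -/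
/-!
On the support `y₁ ≥ x₁ ≥ y₂ ≥ x₂` of the kernel the factor `Θ(y₁ - y₂)` is `1`, and each
exponential of `Ψ` times the kernel separates as `e^{is(x₁+x₂)} e^{c y₁} e^{c' y₂}` with
`c, c' ∈ {i(λ₁ - s), i(λ₂ - s)}`, whose real parts equal `Im s < 0`. By Fubini the integral becomes
a tail integral in `y₁` times an integral over `[x₂, x₁]` in `y₂`; after antisymmetrising, the
terms `e^{(c + c')x₁}` cancel and what remains is `Ψ(x₁, x₂) / (c c')`.
-/

open Complex MeasureTheory Set

-- The kernel of `Q^(0)(s)` and the Whittaker function `Ψ`, with `Θ t` written as `if 0 ≤ t`.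
noncomputable def elemBaxterKernel (s : ℂ) (x y : ℝ × ℝ) : ℂ :=
  (if 0 ≤ y.1 - x.1 then (1 : ℂ) else 0) * (if 0 ≤ x.1 - y.2 then (1 : ℂ) else 0) *
    (if 0 ≤ y.2 - x.2 then (1 : ℂ) else 0) * exp (I * s * ((x.1 : ℂ) + x.2 - y.1 - y.2))

noncomputable def elemWhittaker (l₁ l₂ : ℝ) (y : ℝ × ℝ) : ℂ :=
  (exp (I * (l₁ * y.1 + l₂ * y.2 : ℝ)) - exp (I * (l₂ * y.1 + l₁ * y.2 : ℝ))) /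
      (I * ((l₁ : ℂ) - l₂)) * (if 0 ≤ y.1 - y.2 then (1 : ℂ) else 0)

noncomputable def expOnBaxterSupport (a b : ℂ) (x y : ℝ × ℝ) : ℂ :=
  (Ici x.1).indicator (fun t : ℝ => exp (a * t)) y.1 *
    (Icc x.2 x.1).indicator (fun t : ℝ => exp (b * t)) y.2

theorem exp_I_mul_add_eq (s : ℂ) (μ ν t₁ t₂ : ℝ) :
    exp (I * (μ * t₁ + ν * t₂ : ℝ)) =
      exp (I * s * (t₁ + t₂)) * (exp (I * (μ - s) * t₁) * exp (I * (ν - s) * t₂)) := by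
  rw [← exp_add, ← exp_add]
  push_cast
  congr 1
  ring

theorem elemBaxterKernel_mul_elemWhittaker (s : ℂ) (l₁ l₂ : ℝ) (x y : ℝ × ℝ) :
    elemBaxterKernel s x y * elemWhittaker l₁ l₂ y =
      exp (I * s * (x.1 + x.2)) / (I * (l₁ - l₂)) *
        (expOnBaxterSupport (I * (l₁ - s)) (I * (l₂ - s)) x y -
          expOnBaxterSupport (I * (l₂ - s)) (I * (l₁ - s)) x y) := by
  obtain ⟨x₁, x₂⟩ := x
  obtain ⟨y₁, y₂⟩ := y
  simp only [elemBaxterKernel, elemWhittaker, expOnBaxterSupport, indicator_apply, mem_Ici,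
    mem_Icc, sub_nonneg]
  by_cases h₁ : x₁ ≤ y₁
  · by_cases h₂ : x₂ ≤ y₂ ∧ y₂ ≤ x₁
    · have hphase : exp (I * s * ((x₁ : ℂ) + x₂ - y₁ - y₂)) * exp (I * s * (y₁ + y₂)) =
          exp (I * s * (x₁ + x₂)) := by
        rw [← exp_add]
        congr 1
        ring
      simp only [h₁, h₂, h₂.2.trans h₁, and_self, if_true, one_mul, mul_one,
        exp_I_mul_add_eq s l₁ l₂ y₁ y₂, exp_I_mul_add_eq s l₂ l₁ y₁ y₂]
      linear_combination (exp (I * (l₁ - s) * y₁) * exp (I * (l₂ - s) * y₂) -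
        exp (I * (l₂ - s) * y₁) * exp (I * (l₁ - s) * y₂)) / (I * (l₁ - l₂)) * hphase
    · rcases not_and_or.mp h₂ with h₂ | h₂ <;> simp [h₂]
  · simp [h₁]

theorem integrable_expOnBaxterSupport {a : ℂ} (ha : a.re < 0) (b : ℂ) (x : ℝ × ℝ) :
    Integrable (expOnBaxterSupport a b x) := by
  rw [Measure.volume_eq_prod]
  refine Integrable.mul_prod (f := (Ici x.1).indicator fun t : ℝ => exp (a * t))
    (g := (Icc x.2 x.1).indicator fun t : ℝ => exp (b * t)) ?_ ?_
  · exact ((integrableOn_Ici_iff_integrableOn_Ioi).mpr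
      (integrableOn_exp_mul_complex_Ioi ha x.1)).integrable_indicator measurableSet_Ici
  · exact (by fun_prop : Continuous fun t : ℝ => exp (b * t)).integrableOn_Icc.integrable_indicator
      measurableSet_Icc

theorem integral_expOnBaxterSupport {a b : ℂ} (ha : a.re < 0) (hb : b ≠ 0) {x : ℝ × ℝ}
    (hx : x.2 ≤ x.1) :
    ∫ y, expOnBaxterSupport a b x y =
      -exp (a * x.1) / a * ((exp (b * x.1) - exp (b * x.2)) / b) := by
  rw [Measure.volume_eq_prod]
  unfold expOnBaxterSupport
  rw [integral_prod_mul (f := (Ici x.1).indicator fun t : ℝ => exp (a * t))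
    (g := (Icc x.2 x.1).indicator fun t : ℝ => exp (b * t)),
    integral_indicator measurableSet_Ici, integral_Ici_eq_integral_Ioi,
    integral_exp_mul_complex_Ioi ha, integral_indicator measurableSet_Icc,
    integral_Icc_eq_integral_Ioc, ← intervalIntegral.integral_of_le hx,
    integral_exp_mul_complex hb]

theorem integral_elemBaxterKernel_mul_elemWhittaker {s : ℂ} (hs : s.im < 0) (l₁ l₂ : ℝ)
    {x : ℝ × ℝ} (hx : x.2 ≤ x.1) :
    ∫ y, elemBaxterKernel s x y * elemWhittaker l₁ l₂ y =
      1 / ((s - l₁) * (s - l₂)) * (1 / I ^ 2) * elemWhittaker l₁ l₂ x := by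
  have hre : ∀ l : ℝ, (I * (l - s)).re < 0 := fun l => by simpa using hs
  have hne : ∀ l : ℝ, I * (l - s) ≠ 0 := fun l h => by simpa [h] using hre l
  have hL : (s - l₁) * (s - l₂) = -(I * (l₁ - s) * (I * (l₂ - s))) := by
    linear_combination (l₁ - s) * (l₂ - s) * I_sq
  simp_rw [elemBaxterKernel_mul_elemWhittaker]
  rw [integral_const_mul, integral_sub (integrable_expOnBaxterSupport (hre l₁) _ x)
    (integrable_expOnBaxterSupport (hre l₂) _ x), integral_expOnBaxterSupport (hre l₁) (hne l₂) hx,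
    integral_expOnBaxterSupport (hre l₂) (hne l₁) hx]
  simp only [elemWhittaker, sub_nonneg.mpr hx, if_true, mul_one, exp_I_mul_add_eq s l₁ l₂,
    exp_I_mul_add_eq s l₂ l₁, hL, I_sq]
  -- `ring` must see `c₁⁻¹, c₂⁻¹` as atoms, not as inverses of expanded sums.
  generalize I * (l₁ - s) = c₁
  generalize I * (l₂ - s) = c₂
  ring

theorem elementary_baxter_eigen_gl2_general (l₁ l₂ : ℝ)
    (s : ℂ) (hs : s.im < 0) (x₁ x₂ : ℝ) (hx : x₂ < x₁) :
    (∫ y : ℝ × ℝ,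
        (if 0 ≤ y.1 - x₁ then (1 : ℂ) else 0) * (if 0 ≤ x₁ - y.2 then (1 : ℂ) else 0) *
          (if 0 ≤ y.2 - x₂ then (1 : ℂ) else 0) *
          Complex.exp (Complex.I * s * ((x₁ : ℂ) + x₂ - y.1 - y.2)) *
          ((Complex.exp (Complex.I * (l₁ * y.1 + l₂ * y.2 : ℝ)) -
              Complex.exp (Complex.I * (l₂ * y.1 + l₁ * y.2 : ℝ))) /
              (Complex.I * ((l₁ : ℂ) - l₂)) *
            (if 0 ≤ y.1 - y.2 then (1 : ℂ) else 0))) =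
      (1 / ((s - l₁) * (s - l₂))) * (1 / Complex.I ^ 2) *
        ((Complex.exp (Complex.I * (l₁ * x₁ + l₂ * x₂ : ℝ)) -
            Complex.exp (Complex.I * (l₂ * x₁ + l₁ * x₂ : ℝ))) /
            (Complex.I * ((l₁ : ℂ) - l₂)) *
          (if 0 ≤ x₁ - x₂ then (1 : ℂ) else 0)) :=
  integral_elemBaxterKernel_mul_elemWhittaker hs l₁ l₂ (x := (x₁, x₂)) hx.le

/-- The `ℓ=1` eigenfunction property of the elementary Baxter operator acting on the
elementary `gl₂`-Whittaker function
`Ψ(y₁,y₂) = (e^{i(λ₁y₁+λ₂y₂)} - e^{i(λ₂y₁+λ₁y₂)})/(i(λ₁-λ₂))·Θ(y₁-y₂)`: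
`∫_{ℝ²} Θ(y₁-x₁)Θ(x₁-y₂)Θ(y₂-x₂) e^{is(x₁+x₂-y₁-y₂)} Ψ(y₁,y₂) dy
  = (1/((s-λ₁)(s-λ₂)))·(1/i²)·Ψ(x₁,x₂)` for `Im s < 0`. -/
theorem elementary_baxter_eigen_gl2 (l₁ l₂ : ℝ) (hl : l₁ ≠ l₂) (t₁ t₂ : ℝ) (ht : t₁ ≠ t₂)
    (s : ℂ) (hs : s.im < 0) (x₁ x₂ : ℝ) (hx : x₂ < x₁) :
    (∫ y : ℝ × ℝ,
        (if 0 ≤ y.1 - x₁ then (1 : ℂ) else 0) * (if 0 ≤ x₁ - y.2 then (1 : ℂ) else 0) *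
          (if 0 ≤ y.2 - x₂ then (1 : ℂ) else 0) *
          Complex.exp (Complex.I * s * ((x₁ : ℂ) + x₂ - y.1 - y.2)) *
          ((Complex.exp (Complex.I * (l₁ * y.1 + l₂ * y.2 : ℝ)) -
              Complex.exp (Complex.I * (l₂ * y.1 + l₁ * y.2 : ℝ))) /
              (Complex.I * ((l₁ : ℂ) - l₂)) *
            (if 0 ≤ y.1 - y.2 then (1 : ℂ) else 0))) =
      (1 / ((s - l₁) * (s - l₂))) * (1 / Complex.I ^ 2) *
        ((Complex.exp (Complex.I * (l₁ * x₁ + l₂ * x₂ : ℝ)) -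
            Complex.exp (Complex.I * (l₂ * x₁ + l₁ * x₂ : ℝ))) /
            (Complex.I * ((l₁ : ℂ) - l₂)) *
          (if 0 ≤ x₁ - x₂ then (1 : ℂ) else 0)) :=
  elementary_baxter_eigen_gl2_general l₁ l₂ s hs x₁ x₂ hx
end
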